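/- Let P ⊆ ℝⁿ be a centrally symmetric polytope with 0 in its interior and let x ∈ ∂P be a boundary point that is not an extreme point. Then there exist δ₀ > 0 and k > 0 such that for all 0 ≤ δ ≤ δ₀, the point ((1 − k·δ^{1/(n−1)})) x belongs to the convex floating body P_δ. -/

import Mathlib

open MeasureTheory

lemma auxCube {n : ℕ} (hn : 0 < n) (w : EuclideanSpace ℝ (Fin n)) (hw : ‖w‖ = 1)
    (x₀ : EuclideanSpace ℝ (Fin n)) (a β : ℝ) (ha : 0 ≤ a) (hβ : 0 ≤ β)
    (S : Set (EuclideanSpace ℝ (Fin n)))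
    (hS : ∀ θ : ℝ, θ ∈ Set.Icc 0 a → ∀ v : EuclideanSpace ℝ (Fin n), ‖v‖ ≤ n * β →
      x₀ + θ • w + v ∈ S) :
    ENNReal.ofReal (a * β ^ (n - 1)) ≤ volume S := by
  classical
  set i₀ : Fin n := ⟨0, hn⟩
  -- orthonormal basis with b i₀ = w
  have hcard : Module.finrank ℝ (EuclideanSpace ℝ (Fin n)) = Fintype.card (Fin n) := by
    simp [finrank_euclideanSpace]
  have horth : Orthonormal ℝ (({i₀} : Set (Fin n)).restrict (fun _ => w)) := by
    constructor
    · intro i; exact hw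
    · intro i j hij
      exact absurd (Subsingleton.elim i j) hij
  obtain ⟨b, hb⟩ := horth.exists_orthonormalBasis_extension_of_card_eq hcard
  have hbi₀ : b i₀ = w := hb i₀ rfl
  set cc : Fin n → ℝ := fun i => if i = i₀ then a else β with hcc
  set C : Set (EuclideanSpace ℝ (Fin n)) :=
    (MeasurableEquiv.toLp 2 (Fin n → ℝ)).symm ⁻¹' (Set.univ.pi fun i => Set.Icc 0 (cc i)) with hC
  have hCmem : ∀ z : EuclideanSpace ℝ (Fin n), z ∈ C ↔ ∀ i, z i ∈ Set.Icc 0 (cc i) := by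
    intro z
    simp only [hC, Set.mem_preimage, Set.mem_univ_pi]
    exact Iff.rfl
  have hCmeas : MeasurableSet C :=
    (MeasurableEquiv.toLp 2 (Fin n → ℝ)).symm.measurable
      (MeasurableSet.univ_pi fun i => measurableSet_Icc)
  -- volume of C
  have hvolC : volume C = ENNReal.ofReal (a * β ^ (n - 1)) := by
    rw [hC, (EuclideanSpace.volume_preserving_symm_measurableEquiv_toLp (Fin n)).measure_preimage
      (MeasurableSet.univ_pi fun i => measurableSet_Icc).nullMeasurableSet]
    rw [volume_pi_pi]
    have h1 : ∀ i, volume (Set.Icc 0 (cc i)) = ENNReal.ofReal (cc i) := by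
      intro i; rw [Real.volume_Icc, sub_zero]
    simp_rw [h1]
    rw [← ENNReal.ofReal_prod_of_nonneg (by intro i _; by_cases h : i = i₀ <;> simp [hcc, h, ha, hβ])]
    congr 1
    rw [← Finset.mul_prod_erase Finset.univ cc (Finset.mem_univ i₀)]
    have h2 : ∀ i ∈ Finset.univ.erase i₀, cc i = β := by
      intro i hi
      simp [hcc, Finset.mem_erase.mp hi |>.1]
    rw [Finset.prod_congr rfl h2, Finset.prod_const, hcc]
    simp [Finset.card_erase_of_mem, Finset.card_univ]
  -- the image set
  have hsub : (fun z => x₀ + z) '' (b.repr.symm '' C) ⊆ S := by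
    rintro q ⟨z', ⟨z, hzC, rfl⟩, rfl⟩
    have hz := (hCmem z).1 hzC
    set θ := z i₀ with hθ
    have hθmem : θ ∈ Set.Icc 0 a := by
      have := hz i₀; simpa [hcc] using this
    set v : EuclideanSpace ℝ (Fin n) := b.repr.symm z - θ • w with hv
    have hzeq : x₀ + b.repr.symm z = x₀ + θ • w + v := by rw [hv]; abel
    show x₀ + b.repr.symm z ∈ S
    rw [hzeq]
    refine hS θ hθmem v ?_
    have hv2 : v = b.repr.symm (z - θ • EuclideanSpace.single i₀ 1) := by
      rw [hv, map_sub, _root_.map_smul, b.repr_symm_single, hbi₀]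
    rw [hv2, LinearIsometryEquiv.norm_map]
    have hnorm : ‖z - θ • EuclideanSpace.single i₀ (1:ℝ)‖ ≤ Real.sqrt ((n : ℝ) ^ 2 * β ^ 2) := by
      rw [EuclideanSpace.norm_eq]
      apply Real.sqrt_le_sqrt
      have hcoord : ∀ i, ‖(z - θ • EuclideanSpace.single i₀ (1:ℝ)) i‖ ^ 2 ≤ β ^ 2 := by
        intro i
        have : (z - θ • EuclideanSpace.single i₀ (1:ℝ)) i
            = z i - θ * (if i = i₀ then 1 else 0) := by
          simp [PiLp.sub_apply, PiLp.smul_apply, EuclideanSpace.single_apply, smul_eq_mul]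
        rw [this]
        by_cases h : i = i₀
        · subst h; simp [← hθ]; positivity
        · simp only [h, if_false, mul_zero, sub_zero]
          have h1 := (hz i).1
          have h2 := (hz i).2
          rw [hcc] at h2; simp only [h, if_false] at h2
          rw [Real.norm_eq_abs, sq_abs]
          nlinarith
      calc ∑ i, ‖(z - θ • EuclideanSpace.single i₀ (1:ℝ)) i‖ ^ 2
          ≤ ∑ _i : Fin n, β ^ 2 := Finset.sum_le_sum (fun i _ => hcoord i)
        _ = (n : ℝ) * β ^ 2 := by simp
        _ ≤ (n : ℝ) ^ 2 * β ^ 2 := by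
            have h1 : (1:ℝ) ≤ (n:ℝ) := by exact_mod_cast hn
            nlinarith [mul_le_mul_of_nonneg_right h1
              (mul_nonneg (by positivity : (0:ℝ) ≤ (n:ℝ)) (sq_nonneg β))]
    refine hnorm.trans ?_
    rw [show ((n:ℝ))^2 * β^2 = ((n:ℝ)*β)^2 by ring, Real.sqrt_sq (by positivity)]
  -- measure computation
  have himg : (fun z => x₀ + z) '' (b.repr.symm '' C) = (fun q => b.repr (q - x₀)) ⁻¹' C := by
    ext q
    constructor
    · rintro ⟨z', ⟨z, hzC, rfl⟩, rfl⟩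
      simpa using hzC
    · intro hq
      exact ⟨b.repr.symm (b.repr (q - x₀)), ⟨b.repr (q - x₀), hq, rfl⟩, by simp⟩
  have hmp : MeasurePreserving (fun q : EuclideanSpace ℝ (Fin n) => b.repr (q - x₀))
      volume volume :=
    b.measurePreserving_repr.comp (measurePreserving_sub_right volume x₀)
  calc ENNReal.ofReal (a * β ^ (n - 1)) = volume C := hvolC.symm
    _ = volume ((fun q => b.repr (q - x₀)) ⁻¹' C) :=
        (hmp.measure_preimage hCmeas.nullMeasurableSet).symm
    _ = volume ((fun z => x₀ + z) '' (b.repr.symm '' C)) := by rw [himg]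
    _ ≤ volume S := measure_mono hsub

noncomputable def floatingBody {n : ℕ} (S : Set (EuclideanSpace ℝ (Fin n))) (δ : ℝ) :
    Set (EuclideanSpace ℝ (Fin n)) :=
  {x | ∀ (y : EuclideanSpace ℝ (Fin n)) (c : ℝ),
    volume (S ∩ {z | c ≤ (inner ℝ z y : ℝ)}) ≤ ENNReal.ofReal δ * volume S → (inner ℝ x y : ℝ) ≤ c}

set_option maxHeartbeats 1000000 in
theorem stmt16 (n : ℕ) (hn : 2 ≤ n)
    (P : Set (EuclideanSpace ℝ (Fin n)))
    (V : Set (EuclideanSpace ℝ (Fin n))) (hVfin : V.Finite) (hPpoly : P = convexHull ℝ V)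
    (hsym : P = -P) (h0 : (0:EuclideanSpace ℝ (Fin n)) ∈ interior P)
    (x : EuclideanSpace ℝ (Fin n)) (hx : x ∈ frontier P)
    (hxe : x ∉ Set.extremePoints ℝ P) :
    ∃ δ₀ > (0:ℝ), ∃ k > (0:ℝ), ∀ δ : ℝ, 0 ≤ δ → δ ≤ δ₀ →
      (1 - k * δ ^ ((1:ℝ) / (n - 1))) • x ∈ floatingBody P δ := by
  classical
  obtain ⟨m, rfl⟩ : ∃ m, n = m + 2 := ⟨n - 2, by omega⟩
  clear hn
  have hPconv : Convex ℝ P := hPpoly ▸ convex_convexHull ℝ V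
  have hPcomp : IsCompact P := hPpoly ▸ hVfin.isCompact_convexHull ℝ
  have hPclosed : IsClosed P := hPcomp.isClosed
  have hxP : x ∈ P := hPclosed.frontier_subset hx
  -- inner ball
  obtain ⟨r, hrpos, hrball⟩ : ∃ r > (0:ℝ),
      Metric.closedBall (0:EuclideanSpace ℝ (Fin (m+2))) r ⊆ P := by
    rw [mem_interior_iff_mem_nhds, Metric.mem_nhds_iff] at h0
    obtain ⟨ε, hε, hsub⟩ := h0
    refine ⟨ε/2, by positivity, le_trans ?_ hsub⟩
    intro z hz
    have h1 : ‖z‖ ≤ ε/2 := by simpa [Metric.mem_closedBall] using hz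
    simp only [Metric.mem_ball, dist_zero_right]
    linarith
  -- outer ball
  obtain ⟨R, hRpos, hrR, hRball⟩ : ∃ R : ℝ, 0 < R ∧ r ≤ R ∧
      P ⊆ Metric.closedBall 0 R := by
    obtain ⟨R₀, hR₀⟩ := hPcomp.isBounded.subset_closedBall 0
    exact ⟨max R₀ r, lt_of_lt_of_le hrpos (le_max_right _ _), le_max_right _ _,
      hR₀.trans (Metric.closedBall_subset_closedBall (le_max_left _ _))⟩
  have hRr : 0 < R + r := by linarith
  -- volume facts
  have hPfin : volume P < ⊤ := hPcomp.measure_lt_top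
  have hvolppos : 0 < volume P :=
    MeasureTheory.Measure.measure_pos_of_nonempty_interior _ ⟨0, h0⟩
  obtain ⟨volPR, hvolPRpos, hvolP⟩ : ∃ volPR : ℝ, 0 < volPR ∧
      volume P = ENNReal.ofReal volPR :=
    ⟨(volume P).toReal, ENNReal.toReal_pos hvolppos.ne' hPfin.ne,
      (ENNReal.ofReal_toReal hPfin.ne).symm⟩
  obtain ⟨V₄, hV₄pos, hV₄vol⟩ : ∃ V₄ : ℝ, 0 < V₄ ∧
      volume (Metric.closedBall (0:EuclideanSpace ℝ (Fin (m+2))) (r/4))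
        = ENNReal.ofReal V₄ := by
    have hfin : volume (Metric.closedBall (0:EuclideanSpace ℝ (Fin (m+2))) (r/4)) < ⊤ :=
      measure_closedBall_lt_top
    have h1 : (0:ENNReal) < volume (Metric.closedBall (0:EuclideanSpace ℝ (Fin (m+2))) (r/4)) :=
      Metric.measure_closedBall_pos volume 0 (by positivity)
    exact ⟨_, ENNReal.toReal_pos h1.ne' hfin.ne, (ENNReal.ofReal_toReal hfin.ne).symm⟩
  -- non-extreme point: get the segment
  have hseg : ∃ s > (0:ℝ), ∃ w : EuclideanSpace ℝ (Fin (m+2)), ‖w‖ = 1 ∧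
      x + s • w ∈ P ∧ x - s • w ∈ P := by
    rw [mem_extremePoints] at hxe
    push_neg at hxe
    obtain ⟨u, huP, v, hvP, hxseg, hne⟩ := hxe hxP
    obtain ⟨av, bv, hav, hbv, habv, hxuv⟩ := hxseg
    have huv : u ≠ v := by
      rintro rfl
      have hxu : x = u := by rw [← hxuv, ← add_smul, habv, one_smul]
      exact hne hxu.symm hxu.symm
    have huvne : u - v ≠ 0 := sub_ne_zero_of_ne huv
    have hux : u - x = bv • (u - v) := by
      rw [← hxuv]; match_scalars <;> linarith
    have hvx : v - x = av • (v - u) := by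
      rw [← hxuv]; match_scalars <;> linarith
    set su : ℝ := ‖u - x‖ with hsudef
    set sv : ℝ := ‖v - x‖ with hsvdef
    clear_value su sv
    have hsu0 : 0 < su := by
      rw [hsudef, norm_pos_iff, hux]
      exact smul_ne_zero hbv.ne' huvne
    have hsv0 : 0 < sv := by
      rw [hsvdef, norm_pos_iff, hvx]
      exact smul_ne_zero hav.ne' (by rwa [← neg_sub, neg_ne_zero])
    set s : ℝ := min su sv with hsdef
    clear_value s
    have hs0 : 0 < s := by rw [hsdef]; exact lt_min hsu0 hsv0
    have hsmin1 : s ≤ su := by rw [hsdef]; exact min_le_left _ _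
    have hsmin2 : s ≤ sv := by rw [hsdef]; exact min_le_right _ _
    set w : EuclideanSpace ℝ (Fin (m+2)) := su⁻¹ • (u - x) with hwdef
    clear_value w
    have hwnorm : ‖w‖ = 1 := by
      rw [hwdef, norm_smul, norm_inv, Real.norm_eq_abs, abs_of_pos hsu0, ← hsudef,
        inv_mul_cancel₀ hsu0.ne']
    have hsu2 : su = bv * ‖u - v‖ := by
      rw [hsudef, hux, norm_smul, Real.norm_eq_abs, abs_of_pos hbv]
    have hsv2 : sv = av * ‖u - v‖ := by
      rw [hsvdef, hvx, norm_smul, Real.norm_eq_abs, abs_of_pos hav, norm_sub_rev]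
    have key : sv • (u - x) + su • (v - x) = 0 := by
      calc sv • (u - x) + su • (v - x)
          = (av*‖u-v‖) • (bv • (u - v)) + (bv*‖u-v‖) • (av • (v - u)) := by
            rw [← hsu2, ← hsv2, ← hux, ← hvx]
        _ = 0 := by module
    have huxv : u - x = (-(su/sv)) • (v - x) := by
      have h2 : sv • (u - x) = -(su • (v - x)) := eq_neg_of_add_eq_zero_left key
      have h3 : sv • ((-(su/sv)) • (v - x)) = -(su • (v - x)) := by
        rw [smul_smul, show sv * -(su/sv) = -su by field_simp, neg_smul]
      exact smul_right_injective _ hsv0.ne' (h2.trans h3.symm)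
    refine ⟨s, hs0, w, hwnorm, ?_, ?_⟩
    · have heq : x + s • w = (1 - s/su) • x + (s/su) • u := by
        rw [hwdef]
        match_scalars <;> (field_simp; try ring)
      rw [heq]
      refine hPconv hxP huP ?_ (div_nonneg hs0.le hsu0.le) (by ring)
      rw [sub_nonneg, div_le_one hsu0]
      exact hsmin1
    · have heq : x - s • w = (1 - s/sv) • x + (s/sv) • v := by
        rw [hwdef, huxv]
        match_scalars <;> (field_simp; try ring)
      rw [heq]
      refine hPconv hxP hvP ?_ (div_nonneg hs0.le hsv0.le) (by ring)
      rw [sub_nonneg, div_le_one hsv0]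
      exact hsmin2
  obtain ⟨s, hspos, w, hwnorm, hmemu, hmemv⟩ := hseg
  -- constants
  set e : ℝ := (1:ℝ)/((m+1:ℕ):ℝ) with hedef
  have hm1pos : (0:ℝ) < ((m+1:ℕ):ℝ) := by positivity
  have hepos : 0 < e := by rw [hedef]; positivity
  clear_value e
  set r2 : ℝ := r / ((m+2:ℕ):ℝ) with hr2def
  have hr2pos : 0 < r2 := by rw [hr2def]; positivity
  have hr2 : ((m+2:ℕ):ℝ) * r2 = r := by
    rw [hr2def, mul_comm, div_mul_cancel₀ _ (by positivity : ((m+2:ℕ):ℝ) ≠ 0)]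
  clear_value r2
  set c₂ : ℝ := (r/(R+r)) * s * r2 ^ (m+1) with hc₂def
  have hc₂pos : 0 < c₂ := by rw [hc₂def]; positivity
  clear_value c₂
  set C₁ : ℝ := volPR / c₂ with hC₁def
  have hC₁pos : 0 < C₁ := by rw [hC₁def]; positivity
  clear_value C₁
  set k : ℝ := (2*(R+r)/r) * C₁ ^ e + 1 with hkdef
  have hCe0 : 0 ≤ C₁ ^ e := Real.rpow_nonneg hC₁pos.le e
  have hkpos : 0 < k := by
    rw [hkdef]
    have h1 : 0 ≤ (2*(R+r)/r) * C₁ ^ e := mul_nonneg (by positivity) hCe0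
    linarith
  clear_value k
  set δ₀ : ℝ := min (V₄/(2*volPR)) ((1/k)^(m+1)) with hδ₀def
  have hδ₀pos : 0 < δ₀ := by
    rw [hδ₀def]
    exact lt_min (by positivity) (by positivity)
  clear_value δ₀
  refine ⟨δ₀, hδ₀pos, k, hkpos, ?_⟩
  intro δ hδ0 hδδ₀
  have hcast : ((m+2:ℕ):ℝ) - 1 = ((m+1:ℕ):ℝ) := by push_cast; ring
  rw [hcast, ← hedef]
  set dpe : ℝ := δ ^ e with hdpedef
  have hdpe0 : 0 ≤ dpe := by rw [hdpedef]; exact Real.rpow_nonneg hδ0 e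
  clear_value dpe
  set ε : ℝ := k * dpe with hεdef
  have hε0 : 0 ≤ ε := by rw [hεdef]; exact mul_nonneg hkpos.le hdpe0
  clear_value ε
  have hdpek : dpe ≤ 1/k := by
    have h1 : δ ≤ (1/k)^(m+1) := le_trans hδδ₀ (by rw [hδ₀def]; exact min_le_right _ _)
    have h2 : δ ^ e ≤ ((1/k)^(m+1) : ℝ) ^ e := Real.rpow_le_rpow hδ0 h1 hepos.le
    rw [hdpedef]
    refine h2.trans_eq ?_
    rw [← Real.rpow_natCast (1/k) (m+1), ← Real.rpow_mul (by positivity), hedef,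
      mul_one_div, div_self hm1pos.ne', Real.rpow_one]
  have hε1 : ε ≤ 1 := by
    calc ε = k * dpe := hεdef
    _ ≤ k * (1/k) := by exact mul_le_mul_of_nonneg_left hdpek hkpos.le
    _ = 1 := by rw [mul_one_div, div_self hkpos.ne']
  -- the floating body condition
  simp only [floatingBody, Set.mem_setOf_eq]
  intro y c hcut
  rw [real_inner_smul_left]
  by_contra hlt
  push_neg at hlt
  set ip : ℝ := (inner ℝ x y : ℝ) with hipdef
  clear_value ip
  -- unit vector in direction y (or w if y = 0)
  set yh : EuclideanSpace ℝ (Fin (m+2)) := if y = 0 then w else ‖y‖⁻¹ • y with hyhdef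
  clear_value yh
  have hyhnorm : ‖yh‖ = 1 := by
    rw [hyhdef]
    split
    · exact hwnorm
    · rename_i h
      rw [norm_smul, norm_inv, norm_norm, inv_mul_cancel₀ (norm_ne_zero_iff.mpr h)]
  have hyhinner : (inner ℝ yh y : ℝ) = ‖y‖ := by
    rw [hyhdef]
    split
    · rename_i h; simp [h]
    · rename_i h
      have hy : ‖y‖ ≠ 0 := norm_ne_zero_iff.mpr h
      rw [real_inner_smul_left, real_inner_self_eq_norm_sq, pow_two, ← mul_assoc,
        inv_mul_cancel₀ hy, one_mul]
  have hvolcut : volume (P ∩ {z | c ≤ (inner ℝ z y : ℝ)}) ≤ ENNReal.ofReal (δ * volPR) := by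
    rw [ENNReal.ofReal_mul hδ0, ← hvolP]; exact hcut
  by_cases hyc : c < (r/2) * ‖y‖
  -- Branch A : halfspace too deep, volume too big
  · have hcapsub : (fun z => ((3*r/4) • yh) + z) '' Metric.closedBall 0 (r/4)
        ⊆ P ∩ {z | c ≤ (inner ℝ z y : ℝ)} := by
      rintro q ⟨ω, hω, rfl⟩
      have hωn : ‖ω‖ ≤ r/4 := by simpa [Metric.mem_closedBall] using hω
      constructor
      · apply hrball
        simp only [Metric.mem_closedBall, dist_zero_right]
        calc ‖(3*r/4) • yh + ω‖ ≤ ‖(3*r/4) • yh‖ + ‖ω‖ := norm_add_le _ _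
          _ ≤ 3*r/4 + r/4 := by
              rw [norm_smul, hyhnorm, mul_one, Real.norm_eq_abs, abs_of_nonneg (by positivity)]
              linarith
          _ = r := by ring
      · simp only [Set.mem_setOf_eq]
        rw [inner_add_left, real_inner_smul_left, hyhinner]
        have h1 : |(inner ℝ ω y : ℝ)| ≤ (r/4) * ‖y‖ := by
          refine (abs_real_inner_le_norm ω y).trans ?_
          exact mul_le_mul_of_nonneg_right hωn (norm_nonneg y)
        have h2 := (abs_le.mp h1).1
        linarith only [h2, hyc]
    have hcapvol : volume ((fun z => ((3*r/4) • yh) + z) ''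
        Metric.closedBall (0:EuclideanSpace ℝ (Fin (m+2))) (r/4)) = ENNReal.ofReal V₄ := by
      rw [← hV₄vol]
      have himg : (fun z => ((3*r/4) • yh) + z) ''
          Metric.closedBall (0:EuclideanSpace ℝ (Fin (m+2))) (r/4)
          = (fun q => q - (3*r/4) • yh) ⁻¹' Metric.closedBall 0 (r/4) := by
        ext q
        constructor
        · rintro ⟨ω, hω, rfl⟩; simpa using hω
        · intro hq; exact ⟨q - (3*r/4) • yh, hq, by module⟩
      rw [himg]
      exact (measurePreserving_sub_right volume _).measure_preimage
        measurableSet_closedBall.nullMeasurableSet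
    have hVle : ENNReal.ofReal V₄ ≤ ENNReal.ofReal (δ * volPR) := by
      rw [← hcapvol]
      exact le_trans (measure_mono hcapsub) hvolcut
    have hV4le : V₄ ≤ δ * volPR := by
      rwa [ENNReal.ofReal_le_ofReal_iff (by positivity)] at hVle
    have hδsmall : δ ≤ V₄/(2*volPR) := le_trans hδδ₀ (by rw [hδ₀def]; exact min_le_left _ _)
    have h3 : V₄/(2*volPR)*volPR = V₄/2 := by field_simp
    have h4 := mul_le_mul_of_nonneg_right hδsmall hvolPRpos.le
    linarith only [hV4le, h3, h4, hV₄pos]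
  -- Branch B : the real estimate
  · push_neg at hyc
    have hy0 : y ≠ 0 := by
      intro h
      have hip0 : ip = 0 := by rw [hipdef, h, inner_zero_right]
      rw [hip0, mul_zero] at hlt
      rw [h, norm_zero, mul_zero] at hyc
      linarith
    have hny : 0 < ‖y‖ := norm_pos_iff.mpr hy0
    have hc0 : 0 < c := lt_of_lt_of_le (by positivity) hyc
    have hmulpos : 0 < (1 - ε) * ip := lt_trans hc0 hlt
    have h1ε : 0 < 1 - ε := by
      rcases mul_pos_iff.mp hmulpos with ⟨h, _⟩ | ⟨h, _⟩
      · exact h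
      · linarith
    have hippos : 0 < ip := by
      rcases mul_pos_iff.mp hmulpos with ⟨_, h⟩ | ⟨h, _⟩
      · exact h
      · linarith
    have hipc : c < ip := by
      have h5 : 0 ≤ ε * ip := mul_nonneg hε0 hippos.le
      nlinarith only [hlt, h5]
    have hipR : ip ≤ R * ‖y‖ := by
      have h1 : ip ≤ ‖x‖ * ‖y‖ := by rw [hipdef]; exact real_inner_le_norm x y
      have h2 : ‖x‖ ≤ R := by
        have := hRball hxP
        simpa [Metric.mem_closedBall, dist_zero_right] using this
      have h6 := mul_le_mul_of_nonneg_right h2 (norm_nonneg y)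
      linarith only [h1, h6]
    set t : ℝ := ip - c with htdef
    clear_value t
    have htpos : 0 < t := by rw [htdef]; linarith only [hipc]
    set τ : ℝ := t / ((R+r) * ‖y‖) with hτdef
    clear_value τ
    have hτpos : 0 < τ := by rw [hτdef]; positivity
    have htRny : t < (R+r) * ‖y‖ := by
      have h8 : (R+r) * ‖y‖ = R * ‖y‖ + r * ‖y‖ := by ring
      have h9 : 0 < r * ‖y‖ := mul_pos hrpos hny
      linarith only [hipR, hc0, htdef, h8, h9]
    have hτ1 : τ < 1 := by
      rw [hτdef, div_lt_one (by positivity)]; exact htRny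
    have h1τ0 : 0 < 1 - τ := by linarith only [hτ1]
    have hτt : τ * ((R+r) * ‖y‖) = t := by
      rw [hτdef, div_mul_cancel₀ _ (mul_pos hRr hny).ne']
    -- choose the direction
    set w' : EuclideanSpace ℝ (Fin (m+2)) := if 0 ≤ (inner ℝ w y : ℝ) then w else -w with hw'def
    clear_value w'
    have hw'norm : ‖w'‖ = 1 := by rw [hw'def]; split <;> simp [hwnorm]
    have hw'y : 0 ≤ (inner ℝ w' y : ℝ) := by
      rw [hw'def]; split
      · assumption
      · rw [inner_neg_left]
        rename_i h
        push_neg at h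
        linarith only [h]
    have hxw' : x + s • w' ∈ P := by
      rw [hw'def]; split
      · exact hmemu
      · rw [smul_neg, ← sub_eq_add_neg]; exact hmemv
    -- apply the cube lemma
    set a : ℝ := (1-τ) * s with hadef
    clear_value a
    have hapos : 0 < a := by rw [hadef]; exact mul_pos h1τ0 hspos
    set β : ℝ := τ * r2 with hβdef
    clear_value β
    have hβpos : 0 < β := by rw [hβdef]; exact mul_pos hτpos hr2pos
    have hnβ : ((m+2:ℕ):ℝ) * β = τ * r := by
      rw [hβdef]
      calc ((m+2:ℕ):ℝ) * (τ * r2) = τ * (((m+2:ℕ):ℝ) * r2) := by ring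
        _ = τ * r := by rw [hr2]
    have hkey : ENNReal.ofReal (a * β ^ ((m+2) - 1)) ≤
        volume (P ∩ {z | c ≤ (inner ℝ z y : ℝ)}) := by
      apply auxCube (by omega) w' hw'norm ((1-τ) • x) a β hapos.le hβpos.le
      intro θ hθ vv hvv
      rw [hnβ] at hvv
      set ω : EuclideanSpace ℝ (Fin (m+2)) := τ⁻¹ • vv with hωdef
      clear_value ω
      have hvvr : ‖ω‖ ≤ r := by
        rw [hωdef, norm_smul, norm_inv, Real.norm_eq_abs, abs_of_pos hτpos]
        calc τ⁻¹ * ‖vv‖ ≤ τ⁻¹ * (τ * r) :=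
              mul_le_mul_of_nonneg_left hvv (by positivity)
          _ = r := inv_mul_cancel_left₀ hτpos.ne' r
      have hωP : ω ∈ P := hrball (by simpa [Metric.mem_closedBall, dist_zero_right] using hvvr)
      set lam : ℝ := θ / a with hlamdef
      clear_value lam
      have hlam0 : 0 ≤ lam := by rw [hlamdef]; exact div_nonneg hθ.1 hapos.le
      have hlam1 : lam ≤ 1 := by
        rw [hlamdef, div_le_one hapos]; exact hθ.2
      have hlama : lam * a = θ := by
        rw [hlamdef, div_mul_cancel₀ _ hapos.ne']
      set p : EuclideanSpace ℝ (Fin (m+2)) := (1 - lam) • x + lam • (x + s • w') with hpdef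
      clear_value p
      have hpP : p ∈ P := by
        rw [hpdef]
        exact hPconv hxP hxw' (by linarith only [hlam1]) hlam0 (by ring)
      have hqP : (1-τ) • p + τ • ω ∈ P :=
        hPconv hpP hωP (by linarith only [hτ1]) hτpos.le (by ring)
      have hqeq : (1-τ) • p + τ • ω = (1-τ) • x + θ • w' + vv := by
        rw [hpdef, hωdef, ← hlama, hadef]
        match_scalars
        · ring
        · ring
        · field_simp
      constructor
      · rw [← hqeq]; exact hqP
      · simp only [Set.mem_setOf_eq]
        have hiq : (inner ℝ ((1-τ) • p + τ • ω) y : ℝ)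
            = (1-τ) * ip + θ * (inner ℝ w' y : ℝ) + (inner ℝ vv y : ℝ) := by
          rw [hqeq, inner_add_left, inner_add_left, real_inner_smul_left,
            real_inner_smul_left, ← hipdef]
        rw [← hqeq, hiq]
        have hvvy : -(τ * r * ‖y‖) ≤ (inner ℝ vv y : ℝ) := by
          have h1 : |(inner ℝ vv y : ℝ)| ≤ ‖vv‖ * ‖y‖ := abs_real_inner_le_norm vv y
          have h2 : ‖vv‖ * ‖y‖ ≤ τ * r * ‖y‖ :=
            mul_le_mul_of_nonneg_right hvv (norm_nonneg y)
          have h3 := (abs_le.mp (h1.trans h2)).1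
          linarith only [h3]
        have hθw' : 0 ≤ θ * (inner ℝ w' y : ℝ) := mul_nonneg hθ.1 hw'y
        have h7 := mul_le_mul_of_nonneg_left hipR hτpos.le
        have h8 : τ * ((R+r) * ‖y‖) = τ * (R * ‖y‖) + τ * (r * ‖y‖) := by ring
        have h9 : τ * (r * ‖y‖) = τ * r * ‖y‖ := by ring
        linarith only [hvvy, hθw', h7, hτt, htdef, h8, h9]
    -- convert to reals
    have hreal : a * β ^ (m+1) ≤ δ * volPR := by
      have h1 : ENNReal.ofReal (a * β ^ (m+1)) ≤ ENNReal.ofReal (δ * volPR) := by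
        calc ENNReal.ofReal (a * β ^ (m+1)) = ENNReal.ofReal (a * β ^ ((m+2)-1)) := by norm_num
        _ ≤ volume (P ∩ {z | c ≤ (inner ℝ z y : ℝ)}) := hkey
        _ ≤ ENNReal.ofReal (δ * volPR) := hvolcut
      rwa [ENNReal.ofReal_le_ofReal_iff (by positivity)] at h1
    -- algebra
    have hτleR : τ ≤ R/(R+r) := by
      rw [hτdef, div_le_div_iff₀ (by positivity) hRr]
      have h1 : t ≤ R * ‖y‖ := by linarith only [hipR, hc0, htdef]
      calc t * (R+r) ≤ (R * ‖y‖) * (R+r) :=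
            mul_le_mul_of_nonneg_right h1 hRr.le
        _ = R * ((R+r) * ‖y‖) := by ring
    have h1τ : r/(R+r) ≤ 1 - τ := by
      have h2 : r/(R+r) + R/(R+r) = 1 := by field_simp; ring
      linarith only [hτleR, h2]
    have hτpow : c₂ * τ ^ (m+1) ≤ δ * volPR := by
      have hβeq : β ^ (m+1) = r2^(m+1) * τ^(m+1) := by
        rw [hβdef, mul_pow]; ring
      calc c₂ * τ ^ (m+1) = (r/(R+r)) * s * (r2^(m+1) * τ^(m+1)) := by
            rw [hc₂def]; ring
        _ ≤ (1-τ) * s * (r2^(m+1) * τ^(m+1)) := by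
            apply mul_le_mul_of_nonneg_right _ (by positivity)
            exact mul_le_mul_of_nonneg_right h1τ hspos.le
        _ = a * β ^ (m+1) := by rw [hadef, hβeq]
        _ ≤ δ * volPR := hreal
    have hτC : τ ^ (m+1) ≤ δ * C₁ := by
      rw [hC₁def, mul_div_assoc', le_div_iff₀ hc₂pos]
      linarith only [hτpow]
    have hτle : τ ≤ dpe * C₁ ^ e := by
      have h1 : τ = (τ ^ (m+1) : ℝ) ^ e := by
        rw [← Real.rpow_natCast τ (m+1), ← Real.rpow_mul hτpos.le, hedef,
          mul_one_div, div_self hm1pos.ne', Real.rpow_one]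
      rw [h1, hdpedef]
      calc (τ ^ (m+1) : ℝ) ^ e ≤ (δ * C₁) ^ e :=
            Real.rpow_le_rpow (by positivity) hτC hepos.le
        _ = δ ^ e * C₁ ^ e := Real.mul_rpow hδ0 hC₁pos.le
    -- final contradiction
    have hfin1 : ε * ip < t := by nlinarith only [hlt, htdef]
    have hfin2 : ε * ((r/2) * ‖y‖) ≤ ε * ip := by
      apply mul_le_mul_of_nonneg_left _ hε0
      linarith only [hyc, hipc]
    have hA : ε * ((r/2) * ‖y‖) < τ * ((R+r) * ‖y‖) := by
      rw [hτt]; linarith only [hfin1, hfin2]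
    have hB : τ * ((R+r)*‖y‖) ≤ (dpe * C₁ ^ e) * ((R+r)*‖y‖) :=
      mul_le_mul_of_nonneg_right hτle (by positivity)
    have h5 : 2*(R+r)/r * (r/2) = R + r := by
      field_simp
    have hky : (k * dpe) * ((r/2) * ‖y‖)
        = (dpe * C₁ ^ e) * ((R+r) * ‖y‖) + dpe * ((r/2) * ‖y‖) := by
      rw [hkdef]
      linear_combination (C₁ ^ e * dpe * ‖y‖) * h5
    rw [hεdef] at hA
    have hnn : 0 ≤ dpe * ((r/2)*‖y‖) :=
      mul_nonneg hdpe0 (by positivity)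
    linarith only [hA, hB, hky, hnn]
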